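/- arXiv:2109.05646 — 4 statements merged into one kernel-verified Lean document; each statement's English description precedes it below -/
import Mathlib

section
/- Let ψ(ν) = Σ_{i=1}^r |c_i|²/(δ_i - ν)² with real poles δ_1 ≤ ... ≤ δ_r < 0 not all equal, and suppose c_i ≠ 0 for some i with δ_i = δ_1 and for some i with δ_i = δ_r. Fix ν⁰ > δ_r, define α = 4ψ(ν⁰)³/ψ'(ν⁰)², β = ν⁰ + 2ψ(ν⁰)/ψ'(ν⁰), and F(ν) = α/(β - ν)². Then F(ν) < ψ(ν) for all ν > δ_r with ν ≠ ν⁰. -/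
/-!
Write `aᵢ = ‖cᵢ‖²`, `dᵢ = δᵢ - ν⁰`, `eᵢ = δᵢ - ν`. Then `ψ(ν⁰) = Σ a/d²`, `ψ'(ν⁰) = 2 Σ a/d³` and
`(β - ν) ψ'(ν⁰) / 2 = Σ a e/d³`, so `F(ν) < ψ(ν)` becomes `(Σ a/d²)³ < (Σ a/e²) (Σ a e/d³)²`.
Cauchy–Schwarz gives `(Σ a/d²)² ≤ (Σ a e/d³) (Σ a/(d e))` and `(Σ a/(d e))² < (Σ a/e²) (Σ a/d²)`;
the second one is strict because `e/d` takes different values at the two extreme poles, which both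
carry weight, as soon as `ν ≠ ν⁰`. Squaring the first and combining it with the second gives the
claim.
-/

open Finset

theorem Finset.two_mul_sum_mul_sum_sub_sq_eq {ι R : Type*} [CommRing R] (s : Finset ι)
    (w f g : ι → R) :
    2 * ((∑ i ∈ s, w i * f i ^ 2) * (∑ i ∈ s, w i * g i ^ 2) - (∑ i ∈ s, w i * f i * g i) ^ 2)
      = ∑ i ∈ s, ∑ j ∈ s, w i * w j * (f i * g j - f j * g i) ^ 2 := by
  have hswap : ∑ i ∈ s, ∑ j ∈ s, w i * f i ^ 2 * (w j * g j ^ 2)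
      = ∑ i ∈ s, ∑ j ∈ s, w j * f j ^ 2 * (w i * g i ^ 2) := sum_comm
  calc _ = ∑ i ∈ s, ∑ j ∈ s, w i * f i ^ 2 * (w j * g j ^ 2)
        + ∑ i ∈ s, ∑ j ∈ s, w j * f j ^ 2 * (w i * g i ^ 2)
        - 2 * ∑ i ∈ s, ∑ j ∈ s, w i * f i * g i * (w j * f j * g j) := by
        rw [sq (∑ i ∈ s, _), sum_mul_sum, sum_mul_sum, ← hswap]; ring
    _ = _ := by
      rw [mul_sum, ← sum_add_distrib, ← sum_sub_distrib]
      refine sum_congr rfl fun i _ => ?_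
      rw [mul_sum, ← sum_add_distrib, ← sum_sub_distrib]
      exact sum_congr rfl fun j _ => by ring

theorem Finset.sq_sum_mul_lt_sum_mul_sum {ι R : Type*} [CommRing R] [LinearOrder R]
    [IsStrictOrderedRing R] {s : Finset ι} {w : ι → R} (f g : ι → R)
    (hw : ∀ i ∈ s, 0 ≤ w i) {i j : ι} (hi : i ∈ s) (hj : j ∈ s) (hwi : 0 < w i)
    (hwj : 0 < w j) (hij : f i * g j ≠ f j * g i) :
    (∑ k ∈ s, w k * f k * g k) ^ 2 < (∑ k ∈ s, w k * f k ^ 2) * (∑ k ∈ s, w k * g k ^ 2) := by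
  have hterm : ∀ k ∈ s, ∀ l ∈ s, 0 ≤ w k * w l * (f k * g l - f l * g k) ^ 2 :=
    fun k hk l hl => by have := hw k hk; have := hw l hl; positivity
  have hpos : 0 < ∑ k ∈ s, ∑ l ∈ s, w k * w l * (f k * g l - f l * g k) ^ 2 :=
    sum_pos' (fun k hk => sum_nonneg (hterm k hk)) ⟨i, hi, sum_pos' (hterm i hi)
      ⟨j, hj, by have := sub_ne_zero.2 hij; positivity⟩⟩
  rw [← two_mul_sum_mul_sum_sub_sq_eq] at hpos
  linarith

theorem sum_div_sq_pow_three_div_lt {ι : Type*} [Fintype ι] {a d e : ι → ℝ}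
    (ha : ∀ k, 0 ≤ a k) (hde : ∀ k, 0 < d k * e k) {i j : ι} (hai : 0 < a i) (haj : 0 < a j)
    (hij : e i * d j ≠ e j * d i) :
    (∑ k, a k / d k ^ 2) ^ 3 / (∑ k, a k * e k / d k ^ 3) ^ 2 < ∑ k, a k / e k ^ 2 := by
  have hd : ∀ k, d k ≠ 0 := fun k => left_ne_zero_of_mul (hde k).ne'
  have he : ∀ k, e k ≠ 0 := fun k => right_ne_zero_of_mul (hde k).ne'
  have hed : ∀ k, 0 < e k / d k ^ 3 := fun k => by
    rw [show e k / d k ^ 3 = d k * e k / d k ^ 4 by field_simp [hd k]]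
    exact div_pos (hde k) (by positivity [hd k])
  have hTterm : ∀ k, 0 ≤ a k * e k / d k ^ 3 := fun k => by
    rw [mul_div_assoc]; exact mul_nonneg (ha k) (hed k).le
  set S := ∑ k, a k / d k ^ 2
  set T := ∑ k, a k * e k / d k ^ 3
  set M := ∑ k, a k / (d k * e k)
  set P := ∑ k, a k / e k ^ 2
  have hS : 0 < S := sum_pos' (fun k _ => by have := ha k; positivity [hd k])
    ⟨i, mem_univ i, by positivity [hd i]⟩
  have hT : 0 < T := sum_pos' (fun k _ => hTterm k)
    ⟨i, mem_univ i, by rw [mul_div_assoc]; exact mul_pos hai (hed i)⟩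
  have hSTM : S ^ 2 ≤ T * M := sum_sq_le_sum_mul_sum_of_sq_le_mul _ (fun k _ => hTterm k)
    (fun k _ => div_nonneg (ha k) (hde k).le)
    (fun k _ => le_of_eq (by field_simp [hd k, he k]))
  have hMPS : M ^ 2 < P * S := by
    have h := sq_sum_mul_lt_sum_mul_sum (s := univ) (w := a) (fun k => (e k)⁻¹)
      (fun k => (d k)⁻¹) (fun k _ => ha k) (mem_univ i) (mem_univ j) hai haj
      (by rwa [← mul_inv, ← mul_inv, Ne, inv_inj])
    calc M ^ 2 = (∑ k, a k * (e k)⁻¹ * (d k)⁻¹) ^ 2 := by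
          simp only [M, div_eq_mul_inv, mul_inv, mul_assoc, mul_comm (d _)⁻¹]
      _ < _ := h
      _ = P * S := by simp only [P, S, div_eq_mul_inv, inv_pow]
  refine lt_of_mul_lt_mul_right ?_ hS.le
  rw [div_mul_eq_mul_div, div_lt_iff₀ (by positivity)]
  calc S ^ 3 * S = S ^ 2 * S ^ 2 := by ring
    _ ≤ (T * M) * (T * M) := mul_self_le_mul_self (sq_nonneg _) hSTM
    _ = T ^ 2 * M ^ 2 := by ring
    _ < T ^ 2 * (P * S) := mul_lt_mul_of_pos_left hMPS (by positivity)
    _ = P * S * T ^ 2 := by ring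

theorem hasDerivAt_sum_div_sq {ι : Type*} (s : Finset ι) (a δ : ι → ℝ) {ν : ℝ}
    (hν : ∀ i ∈ s, δ i ≠ ν) :
    HasDerivAt (fun x => ∑ i ∈ s, a i / (δ i - x) ^ 2) (∑ i ∈ s, 2 * a i / (δ i - ν) ^ 3) ν := by
  refine HasDerivAt.fun_sum fun i hi => ?_
  have hne : δ i - ν ≠ 0 := sub_ne_zero.2 (hν i hi)
  have hsub : HasDerivAt (fun x => δ i - x) (-1) ν := by
    simpa using (hasDerivAt_id ν).const_sub (δ i)
  refine ((hasDerivAt_const ν (a i)).fun_div (hsub.fun_pow 2) (pow_ne_zero 2 hne)).congr_deriv ?_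
  field_simp
  ring

theorem Monotone.apply_bot_lt_apply_top {α β : Type*} [Preorder α] [OrderBot α] [OrderTop α]
    [PartialOrder β] {f : α → β} (hf : Monotone f) (h : ∃ x y, f x ≠ f y) : f ⊥ < f ⊤ := by
  refine (hf bot_le).lt_of_ne fun hbt => ?_
  have hconst : ∀ x, f x = f ⊥ := fun x => ((hf le_top).trans_eq hbt.symm).antisymm (hf bot_le)
  obtain ⟨x, y, hxy⟩ := h
  exact hxy ((hconst x).trans (hconst y).symm)

theorem sum_div_sq_add_mul_sum_div_pow_three {ι : Type*} (s : Finset ι) (a δ : ι → ℝ)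
    {μ : ℝ} (hμ : ∀ i ∈ s, δ i ≠ μ) (ν : ℝ) :
    ∑ i ∈ s, a i / (δ i - μ) ^ 2 + (μ - ν) * ∑ i ∈ s, a i / (δ i - μ) ^ 3
      = ∑ i ∈ s, a i * (δ i - ν) / (δ i - μ) ^ 3 := by
  rw [mul_sum, ← sum_add_distrib]
  refine sum_congr rfl fun i hi => ?_
  have : δ i - μ ≠ 0 := sub_ne_zero.2 (hμ i hi)
  field_simp
  ring

/-- `α / (β - ν)²` in terms of `S₂ = ψ(μ)` and `2 S₃ = ψ'(μ)`. -/
theorem interpolant_eq {S₂ S₃ : ℝ} (hS₃ : S₃ ≠ 0) (μ ν : ℝ) :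
    4 * S₂ ^ 3 / (2 * S₃) ^ 2 / (μ + 2 * S₂ / (2 * S₃) - ν) ^ 2
      = S₂ ^ 3 / (S₂ + (μ - ν) * S₃) ^ 2 := by
  rw [show μ + 2 * S₂ / (2 * S₃) - ν = (S₂ + (μ - ν) * S₃) / S₃ by field_simp; ring]
  rw [div_pow, div_div_eq_mul_div]
  field_simp
  ring

theorem rational_approx_lower_bounding_general
    (n : ℕ) (δ : Fin (n+1) → ℝ) (c : Fin (n+1) → ℂ)
    (hmono : Monotone δ)
    (hnotall : ∃ i j, δ i ≠ δ j)
    (hc1 : ∃ i, δ i = δ 0 ∧ c i ≠ 0)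
    (hcr : ∃ i, δ i = δ (Fin.last n) ∧ c i ≠ 0)
    (ψ : ℝ → ℝ) (hψ : ψ = fun ν => ∑ i, ‖c i‖^2 / (δ i - ν)^2)
    (ν0 : ℝ) (hν0 : δ (Fin.last n) < ν0)
    (α β : ℝ) (hα : α = 4 * (ψ ν0)^3 / (deriv ψ ν0)^2)
    (hβ : β = ν0 + 2 * ψ ν0 / deriv ψ ν0) :
    ∀ ν : ℝ, δ (Fin.last n) < ν → ν ≠ ν0 → α / (β - ν)^2 < ψ ν := by
  intro ν hν hne
  obtain ⟨i, hi, hci⟩ := hc1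
  obtain ⟨j, hj, hcj⟩ := hcr
  have hlt : ∀ {μ}, δ (Fin.last n) < μ → ∀ k, δ k < μ := fun h k => (hmono k.le_last).trans_lt h
  have hδ : δ i < δ j := by
    simpa only [hi, hj, bot_eq_zero, Fin.top_eq_last] using hmono.apply_bot_lt_apply_top hnotall
  have hderiv : deriv ψ ν0 = 2 * ∑ k, ‖c k‖ ^ 2 / (δ k - ν0) ^ 3 := by
    rw [hψ, (hasDerivAt_sum_div_sq univ _ δ fun k _ => (hlt hν0 k).ne).deriv, mul_sum]
    exact sum_congr rfl fun k _ => mul_div_assoc _ _ _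
  have hS₃ : ∑ k, ‖c k‖ ^ 2 / (δ k - ν0) ^ 3 ≠ 0 := by
    have hcube : ∀ k, (δ k - ν0) ^ 3 < 0 := fun k => Odd.pow_neg (by decide) (sub_neg.2 (hlt hν0 k))
    refine (sum_neg' (fun k _ => div_nonpos_of_nonneg_of_nonpos (sq_nonneg ‖c k‖) (hcube k).le)
      ⟨j, mem_univ j, div_neg_of_pos_of_neg (pow_pos (norm_pos_iff.2 hcj) 2) (hcube j)⟩).ne
  subst hα hβ
  rw [hderiv, hψ, interpolant_eq hS₃,
    sum_div_sq_add_mul_sum_div_pow_three _ _ _ fun k _ => (hlt hν0 k).ne]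
  refine sum_div_sq_pow_three_div_lt (fun k => sq_nonneg _)
    (fun k => mul_pos_of_neg_of_neg (sub_neg.2 (hlt hν0 k)) (sub_neg.2 (hlt hν k)))
    (pow_pos (norm_pos_iff.2 hci) 2) (pow_pos (norm_pos_iff.2 hcj) 2) fun h => ?_
  have : (ν - ν0) * (δ i - δ j) ≠ 0 := mul_ne_zero (sub_ne_zero.2 hne) (sub_ne_zero.2 hδ.ne)
  exact this (by linear_combination h)

/-- Theorem 1 (bounding property): `F(ν) = α/(β-ν)² < ψ(ν)` for all
`ν > δ_r` with `ν ≠ ν⁰`، where `ψ(ν) = Σᵢ |cᵢ|²/(δᵢ - ν)²` has poles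
`δ₁ ≤ … ≤ δ_r < 0` not all equal, `c` is nonzero at the smallest and at the
largest pole, and `α, β` come from interpolation at `ν⁰ > δ_r`. -/
theorem rational_approx_lower_bounding
    (n : ℕ) (δ : Fin (n+1) → ℝ) (c : Fin (n+1) → ℂ)
    (hmono : Monotone δ) (hneg : ∀ i, δ i < 0)
    (hnotall : ∃ i j, δ i ≠ δ j)
    (hc1 : ∃ i, δ i = δ 0 ∧ c i ≠ 0)
    (hcr : ∃ i, δ i = δ (Fin.last n) ∧ c i ≠ 0)
    (ψ : ℝ → ℝ) (hψ : ψ = fun ν => ∑ i, ‖c i‖^2 / (δ i - ν)^2)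
    (ν0 : ℝ) (hν0 : δ (Fin.last n) < ν0)
    (α β : ℝ) (hα : α = 4 * (ψ ν0)^3 / (deriv ψ ν0)^2)
    (hβ : β = ν0 + 2 * ψ ν0 / deriv ψ ν0) :
    ∀ ν : ℝ, δ (Fin.last n) < ν → ν ≠ ν0 → α / (β - ν)^2 < ψ ν :=
  rational_approx_lower_bounding_general n δ c hmono hnotall hc1 hcr ψ hψ ν0 hν0 α β hα hβ
end

section
/- Under the assumptions of the previous bounding theorem, if additionally ψ(ν⁰) > 1 and ν̃ > δ_r is the unique solution of ψ(ν) = 1 on (δ_r, ∞), then the update ν¹ = ν⁰ + 2ψ(ν⁰)(1 - √ψ(ν⁰))/ψ'(ν⁰), which is the unique solution of F(ν) = 1 in (β, ∞), satisfies ν⁰ < ν¹ < ν̃. -/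
/-!
Write `ψ(ν) = ∑ wᵢ / (ν - δᵢ)²`. The rational approximation `F(ν) = α / (ν - β)²` that agrees
with `ψ` to first order at `ν⁰` is `ψ(ν⁰)³ / (ψ(ν⁰) + (ν - ν⁰) S)²` with `S = ∑ wᵢ / (ν⁰ - δᵢ)³`,
and `F(ν) < ψ(ν)` for `ν ≠ ν⁰` is the strict Hölder inequality `(∑ r)³ < (∑ r t²) (∑ r / t)²` for
`rᵢ = wᵢ / (ν⁰ - δᵢ)²`, `tᵢ = (ν⁰ - δᵢ) / (ν - δᵢ)`; it is strict because two poles of positive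
weight are distinct. As `ψ'(ν⁰) < 0` and `ψ(ν⁰) > 1`, the update moves right and solves
`F(ν¹) = 1`, so `ψ(ν¹) > 1 = ψ(ν̃)`, and `ν¹ < ν̃` because `ψ` decreases.
-/

lemma two_mul_lt_add_of_sq_eq_mul {a b r : ℝ} (ha : 0 ≤ a) (hb : 0 ≤ b) (ht : r ^ 2 = a * b)
    (hab : a ≠ b) : 2 * r < a + b := by
  refine lt_of_pow_lt_pow_left₀ 2 (add_nonneg ha hb) ?_
  nlinarith [sq_pos_of_ne_zero (sub_ne_zero.2 hab)]

namespace Finset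

variable {ι : Type*}

theorem sum_sq_lt_sum_mul_sum_of_sq_eq_mul (s : Finset ι) {r f g : ι → ℝ}
    (hf : ∀ i ∈ s, 0 ≤ f i) (hg : ∀ i ∈ s, 0 ≤ g i) (ht : ∀ i ∈ s, r i ^ 2 = f i * g i)
    {i j : ι} (hi : i ∈ s) (hj : j ∈ s) (hij : f i * g j ≠ f j * g i) :
    (∑ i ∈ s, r i) ^ 2 < (∑ i ∈ s, f i) * ∑ i ∈ s, g i := by
  have cross : ∀ k ∈ s, ∀ l ∈ s, (r k * r l) ^ 2 = f k * g l * (f l * g k) := by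
    intro k hk l hl
    rw [mul_pow, ht k hk, ht l hl]
    ring
  have amgm : ∀ k ∈ s, ∀ l ∈ s, 2 * (r k * r l) ≤ f k * g l + f l * g k := fun k hk l hl =>
    two_mul_le_add_of_sq_le_mul (mul_nonneg (hf k hk) (hg l hl)) (mul_nonneg (hf l hl) (hg k hk))
      (cross k hk l hl).le
  have hsum : ∑ k ∈ s, ∑ l ∈ s, 2 * (r k * r l) < ∑ k ∈ s, ∑ l ∈ s, (f k * g l + f l * g k) :=
    sum_lt_sum (fun k hk => sum_le_sum fun l hl => amgm k hk l hl)
      ⟨i, hi, sum_lt_sum (fun l hl => amgm i hi l hl) ⟨j, hj, two_mul_lt_add_of_sq_eq_mul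
        (mul_nonneg (hf i hi) (hg j hj)) (mul_nonneg (hf j hj) (hg i hi)) (cross i hi j hj) hij⟩⟩
  simp only [← mul_sum, sum_add_distrib, ← sum_mul] at hsum
  linarith

/-- Strict Hölder inequality with exponents `3` and `3/2`, via two applications of
Cauchy–Schwarz: `(∑ r)² < (∑ r t) (∑ r / t)` and `(∑ r t)² ≤ (∑ r t²) (∑ r)`. -/
theorem sum_pow_three_lt_sum_mul_sq_mul_sum_div_sq (s : Finset ι) {r t : ι → ℝ}
    (hr : ∀ i ∈ s, 0 ≤ r i) (ht : ∀ i ∈ s, 0 < t i) {i j : ι} (hi : i ∈ s) (hj : j ∈ s)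
    (hri : 0 < r i) (hrj : 0 < r j) (htij : t i ≠ t j) :
    (∑ i ∈ s, r i) ^ 3 < (∑ i ∈ s, r i * t i ^ 2) * (∑ i ∈ s, r i / t i) ^ 2 := by
  set A := ∑ i ∈ s, r i
  set B := ∑ i ∈ s, r i * t i
  set C := ∑ i ∈ s, r i / t i
  set D := ∑ i ∈ s, r i * t i ^ 2
  have hA : 0 < A := sum_pos' hr ⟨i, hi, hri⟩
  have hAB : A ^ 2 < B * C := by
    refine sum_sq_lt_sum_mul_sum_of_sq_eq_mul s (fun k hk => mul_nonneg (hr k hk) (ht k hk).le)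
      (fun k hk => div_nonneg (hr k hk) (ht k hk).le) (fun k hk => ?_) hi hj ?_
    · field_simp [(ht k hk).ne']
    · have hti := ht i hi
      have htj := ht j hj
      intro h
      field_simp [hri.ne', hrj.ne'] at h
      exact htij ((pow_left_inj₀ hti.le htj.le two_ne_zero).1 h)
  have hBD : B ^ 2 ≤ D * A := by
    refine sum_sq_le_sum_mul_sum_of_sq_le_mul s (fun k hk => mul_nonneg (hr k hk) (sq_nonneg _))
      hr fun k hk => le_of_eq ?_
    ring
  refine lt_of_mul_lt_mul_right ?_ hA.le
  calc A ^ 3 * A = (A ^ 2) ^ 2 := by ring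
    _ < (B * C) ^ 2 := pow_lt_pow_left₀ hAB (sq_nonneg _) two_ne_zero
    _ = B ^ 2 * C ^ 2 := by ring
    _ ≤ D * A * C ^ 2 := mul_le_mul_of_nonneg_right hBD (sq_nonneg _)
    _ = D * C ^ 2 * A := by ring

end Finset

/-- The paper's `F(ν) = α / (ν - β)²`: the unique function of this shape that agrees with `ψ` to
first order at `ν₀`, written through `ψ ν₀` and `ψ' ν₀` (`β = ν₀ + 2 ψ ν₀ / ψ' ν₀`). -/
noncomputable def rationalApprox (ψ : ℝ → ℝ) (ν₀ ν : ℝ) : ℝ :=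
  ψ ν₀ ^ 3 / (ψ ν₀ - (ν - ν₀) * deriv ψ ν₀ / 2) ^ 2

theorem rationalApprox_update_eq_one {ψ : ℝ → ℝ} {ν₀ : ℝ} (hψ : 0 < ψ ν₀)
    (hψ' : deriv ψ ν₀ ≠ 0) :
    rationalApprox ψ ν₀ (ν₀ + 2 * ψ ν₀ * (1 - √(ψ ν₀)) / deriv ψ ν₀) = 1 := by
  have hden : ψ ν₀ - (ν₀ + 2 * ψ ν₀ * (1 - √(ψ ν₀)) / deriv ψ ν₀ - ν₀) * deriv ψ ν₀ / 2
      = ψ ν₀ * √(ψ ν₀) := by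
    field_simp
    ring
  rw [rationalApprox, hden, mul_pow, Real.sq_sqrt hψ.le, ← pow_succ, div_self (by positivity)]

section Secular

variable {ι : Type*} [Fintype ι] (w δ : ι → ℝ)

noncomputable def secularFun (ν : ℝ) : ℝ := ∑ i, w i / (δ i - ν) ^ 2

theorem hasDerivAt_secularFun {ν : ℝ} (hν : ∀ i, δ i ≠ ν) :
    HasDerivAt (secularFun w δ) (∑ i, 2 * w i / (δ i - ν) ^ 3) ν := by
  have hterm (i : ι) : HasDerivAt (fun x => w i / (δ i - x) ^ 2) (2 * w i / (δ i - ν) ^ 3) ν := by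
    have hsub : HasDerivAt (fun x => δ i - x) (-1) ν := by
      simpa using (hasDerivAt_id ν).const_sub (δ i)
    have hne : δ i - ν ≠ 0 := sub_ne_zero.2 (hν i)
    refine ((hasDerivAt_const ν (w i)).fun_div (hsub.fun_pow 2) (pow_ne_zero 2 hne)).congr_deriv ?_
    field_simp
    ring
  exact HasDerivAt.fun_sum fun i _ => hterm i

variable {w δ}

theorem deriv_secularFun_neg (hw : ∀ i, 0 ≤ w i) (hpos : ∃ i, 0 < w i) {ν : ℝ}
    (hν : ∀ i, δ i < ν) : deriv (secularFun w δ) ν < 0 := by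
  rw [(hasDerivAt_secularFun w δ fun i => (hν i).ne).deriv]
  obtain ⟨i, hi⟩ := hpos
  have hcube (k : ι) : (δ k - ν) ^ 3 < 0 := Odd.pow_neg (by decide) (sub_neg.2 (hν k))
  exact Finset.sum_neg'
    (fun k _ => div_nonpos_of_nonneg_of_nonpos (mul_nonneg zero_le_two (hw k)) (hcube k).le)
    ⟨i, Finset.mem_univ _, div_neg_of_pos_of_neg (mul_pos two_pos hi) (hcube i)⟩

theorem secularFun_le_of_le (hw : ∀ i, 0 ≤ w i) {a b : ℝ} (ha : ∀ i, δ i < a) (hab : a ≤ b) :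
    secularFun w δ b ≤ secularFun w δ a :=
  Finset.sum_le_sum fun i _ => div_le_div_of_nonneg_left (hw i)
    (sq_pos_of_ne_zero (sub_ne_zero.2 (ha i).ne)) (by nlinarith [ha i])

theorem secularFun_sub_mul_deriv {ν₀ : ℝ} (hν₀ : ∀ i, δ i ≠ ν₀) (ν : ℝ) :
    secularFun w δ ν₀ - (ν - ν₀) * deriv (secularFun w δ) ν₀ / 2
      = ∑ i, w i * (δ i - ν) / (δ i - ν₀) ^ 3 := by
  rw [(hasDerivAt_secularFun w δ hν₀).deriv, secularFun, Finset.mul_sum, Finset.sum_div,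
    ← Finset.sum_sub_distrib]
  refine Finset.sum_congr rfl fun i _ => ?_
  have := sub_ne_zero.2 (hν₀ i)
  field_simp
  ring

theorem rationalApprox_secularFun_lt (hw : ∀ i, 0 ≤ w i)
    (hspread : ∃ i j, 0 < w i ∧ 0 < w j ∧ δ i ≠ δ j) {ν₀ ν : ℝ} (hν₀ : ∀ i, δ i < ν₀)
    (hν : ∀ i, δ i < ν) (hne : ν ≠ ν₀) :
    rationalApprox (secularFun w δ) ν₀ ν < secularFun w δ ν := by
  obtain ⟨i, j, hwi, hwj, hδij⟩ := hspread
  have hd₀ (k : ι) : δ k - ν₀ < 0 := sub_neg.2 (hν₀ k)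
  have hd (k : ι) : δ k - ν < 0 := sub_neg.2 (hν k)
  set r : ι → ℝ := fun k => w k / (δ k - ν₀) ^ 2
  set t : ι → ℝ := fun k => (δ k - ν₀) / (δ k - ν)
  have hsum_rt : ∑ k, r k * t k ^ 2 = secularFun w δ ν :=
    Finset.sum_congr rfl fun k _ => by
      have := (hd₀ k).ne
      have := (hd k).ne
      simp only [r, t]
      field_simp
  have hsum_rdt : ∑ k, r k / t k = ∑ k, w k * (δ k - ν) / (δ k - ν₀) ^ 3 :=
    Finset.sum_congr rfl fun k _ => by
      have := (hd₀ k).ne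
      have := (hd k).ne
      simp only [r, t]
      field_simp
  have hr (k : ι) : 0 ≤ r k := div_nonneg (hw k) (sq_nonneg _)
  have ht (k : ι) : 0 < t k := div_pos_of_neg_of_neg (hd₀ k) (hd k)
  have hr_pos {k : ι} (hk : 0 < w k) : 0 < r k := div_pos hk (sq_pos_of_ne_zero (hd₀ k).ne)
  have htij : t i ≠ t j := by
    intro h
    have := (hd i).ne
    have := (hd j).ne
    simp only [t] at h
    field_simp at h
    have key : (ν - ν₀) * (δ j - δ i) = 0 := by linear_combination h
    exact hδij (sub_eq_zero.1 ((mul_eq_zero.1 key).resolve_left (sub_ne_zero.2 hne))).symm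
  have hpos : 0 < ∑ k, r k / t k := Finset.sum_pos' (fun k _ => div_nonneg (hr k) (ht k).le)
    ⟨i, Finset.mem_univ _, div_pos (hr_pos hwi) (ht i)⟩
  rw [rationalApprox, secularFun_sub_mul_deriv (fun k => (hν₀ k).ne), ← hsum_rdt, ← hsum_rt,
    div_lt_iff₀ (pow_pos hpos 2)]
  exact Finset.sum_pow_three_lt_sum_mul_sq_mul_sum_div_sq Finset.univ (fun k _ => hr k)
    (fun k _ => ht k) (Finset.mem_univ i) (Finset.mem_univ j) (hr_pos hwi) (hr_pos hwj) htij

end Secular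

theorem Monotone.apply_zero_ne_last {α : Type*} [PartialOrder α] {n : ℕ} {f : Fin (n+1) → α}
    (hf : Monotone f) (hne : ∃ i j, f i ≠ f j) : f 0 ≠ f (Fin.last n) := by
  obtain ⟨i, j, hij⟩ := hne
  intro h
  have hconst (k : Fin (n+1)) : f k = f 0 :=
    le_antisymm (h ▸ hf (Fin.le_last k)) (hf (Fin.zero_le k))
  exact hij ((hconst i).trans (hconst j).symm)

theorem rational_approx_monotone_update_general
    (n : ℕ) (δ : Fin (n+1) → ℝ) (c : Fin (n+1) → ℂ)
    (hmono : Monotone δ)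
    (hnotall : ∃ i j, δ i ≠ δ j)
    (hc1 : ∃ i, δ i = δ 0 ∧ c i ≠ 0)
    (hcr : ∃ i, δ i = δ (Fin.last n) ∧ c i ≠ 0)
    (ψ : ℝ → ℝ) (hψ : ψ = fun ν => ∑ i, ‖c i‖^2 / (δ i - ν)^2)
    (ν0 : ℝ) (hν0 : δ (Fin.last n) < ν0) (hψν0 : 1 < ψ ν0)
    (νt : ℝ) (hνt1 : δ (Fin.last n) < νt) (hνt2 : ψ νt = 1)
    (ν1 : ℝ)
    (hν1 : ν1 = ν0 + 2 * ψ ν0 * (1 - Real.sqrt (ψ ν0)) / deriv ψ ν0) :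
    ν0 < ν1 ∧ ν1 < νt := by
  obtain ⟨i0, hi0, hci0⟩ := hc1
  obtain ⟨ir, hir, hcir⟩ := hcr
  set w : Fin (n+1) → ℝ := fun i => ‖c i‖ ^ 2
  obtain rfl : ψ = secularFun w δ := hψ
  have hw (i : Fin (n+1)) : 0 ≤ w i := sq_nonneg _
  have hpoles {ν : ℝ} (hν : δ (Fin.last n) < ν) (i : Fin (n+1)) : δ i < ν :=
    (hmono (Fin.le_last i)).trans_lt hν
  have hspread : ∃ i j, 0 < w i ∧ 0 < w j ∧ δ i ≠ δ j :=
    ⟨i0, ir, by positivity, by positivity, by rw [hi0, hir]; exact hmono.apply_zero_ne_last hnotall⟩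
  have hderiv : deriv (secularFun w δ) ν0 < 0 :=
    deriv_secularFun_neg hw ⟨ir, by positivity⟩ (hpoles hν0)
  have hstep : ν0 < ν1 := by
    have hsqrt : 1 < √(secularFun w δ ν0) := Real.lt_sqrt_of_sq_lt (by simpa using hψν0)
    rw [hν1]
    exact lt_add_of_pos_right _
      (div_pos_of_neg_of_neg (mul_neg_of_pos_of_neg (by linarith) (by linarith)) hderiv)
  have hF : rationalApprox (secularFun w δ) ν0 ν1 = 1 :=
    hν1 ▸ rationalApprox_update_eq_one (by linarith) hderiv.ne
  have hgt : 1 < secularFun w δ ν1 :=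
    hF ▸ rationalApprox_secularFun_lt hw hspread (hpoles hν0) (hpoles (hν0.trans hstep)) hstep.ne'
  refine ⟨hstep, lt_of_not_ge fun hle => ?_⟩
  linarith [secularFun_le_of_le hw (hpoles hνt1) hle]

/-- Monotone-approach property of the successive rational approximation: if
`ψ(ν⁰) > 1` and `νt` is the unique solution of `ψ(ν) = 1` on `(δ_r, ∞)`, then
the update `ν¹ = ν⁰ + 2ψ(ν⁰)(1 - √ψ(ν⁰))/ψ'(ν⁰)` satisfies `ν⁰ < ν¹ < νt`. -/
theorem rational_approx_monotone_update
    (n : ℕ) (δ : Fin (n+1) → ℝ) (c : Fin (n+1) → ℂ)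
    (hmono : Monotone δ) (hneg : ∀ i, δ i < 0)
    (hnotall : ∃ i j, δ i ≠ δ j)
    (hc1 : ∃ i, δ i = δ 0 ∧ c i ≠ 0)
    (hcr : ∃ i, δ i = δ (Fin.last n) ∧ c i ≠ 0)
    (ψ : ℝ → ℝ) (hψ : ψ = fun ν => ∑ i, ‖c i‖^2 / (δ i - ν)^2)
    (ν0 : ℝ) (hν0 : δ (Fin.last n) < ν0) (hψν0 : 1 < ψ ν0)
    (νt : ℝ) (hνt1 : δ (Fin.last n) < νt) (hνt2 : ψ νt = 1)
    (hνtunique : ∀ ν : ℝ, δ (Fin.last n) < ν → ψ ν = 1 → ν = νt)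
    (ν1 : ℝ)
    (hν1 : ν1 = ν0 + 2 * ψ ν0 * (1 - Real.sqrt (ψ ν0)) / deriv ψ ν0) :
    ν0 < ν1 ∧ ν1 < νt :=
  rational_approx_monotone_update_general n δ c hmono hnotall hc1 hcr ψ hψ ν0 hν0 hψν0 νt hνt1 hνt2
    ν1 hν1
end

section
/- For the problem min_{d ∈ ℂⁿ} (1/2)‖X - d zᵀ‖_F² subject to ‖d‖₂ ≤ 1, where X ∈ ℂ^{n×m} and z ∈ ℂ^m with z ≠ 0, the unique optimal solution is d* = d̂ / max{1, ‖d̂‖₂} with d̂ = X z̄ / ‖z‖₂². -/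
open scoped BigOperators

lemma row_expand (m : ℕ) (x z : Fin m → ℂ) (a b : ℂ) (Z : ℝ)
    (hZ : Z = ∑ j, ‖z j‖^2)
    (hb : (∑ j, x j * (starRingEnd ℂ) (z j)) = (Z:ℂ) * b) :
    ∑ j, ‖x j - a * z j‖^2
      = (∑ j, ‖x j‖^2) - Z * ‖b‖^2 + Z * ‖a - b‖^2 := by
  have habs : ∀ c : ℂ, ‖c‖^2 = Complex.normSq c := fun c => by
    rw [← Complex.sq_norm]
  have h1 : ∀ j, ‖x j - a * z j‖^2
      = ‖x j‖^2 - 2 * ((x j * (starRingEnd ℂ) (z j)) * (starRingEnd ℂ) a).re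
        + (a.re^2 + a.im^2) * ‖z j‖^2 := by
    intro j
    simp only [habs, Complex.normSq_apply, Complex.sub_re, Complex.sub_im,
      Complex.mul_re, Complex.mul_im, Complex.conj_re, Complex.conj_im]
    ring
  simp_rw [h1]
  rw [Finset.sum_add_distrib, Finset.sum_sub_distrib, ← Finset.mul_sum, ← Finset.mul_sum,
    ← Complex.re_sum, ← Finset.sum_mul, hb]
  rw [hZ]
  simp only [habs, Complex.normSq_apply, Complex.sub_re, Complex.sub_im,
    Complex.mul_re, Complex.mul_im, Complex.conj_re, Complex.conj_im,
    Complex.ofReal_re, Complex.ofReal_im]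
  ring

lemma proj_ball {E : Type*} [NormedAddCommGroup E] [InnerProductSpace ℂ E]
    (dh : E) (t : ℝ) (ht : t = max 1 ‖dh‖) (ds : E) (hds : ds = ((t:ℂ))⁻¹ • dh) :
    ‖ds‖ ≤ 1 ∧ ∀ d : E, ‖d‖ ≤ 1 →
      ‖ds - dh‖^2 + ‖d - ds‖^2 ≤ ‖d - dh‖^2 := by
  have ht1 : 1 ≤ t := ht ▸ le_max_left _ _
  have htpos : 0 < t := lt_of_lt_of_le one_pos ht1
  have htne : (t:ℂ) ≠ 0 := by exact_mod_cast ne_of_gt htpos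
  have hnds : ‖ds‖ = ‖dh‖ / t := by
    rw [hds, norm_smul]
    simp [abs_of_pos htpos, div_eq_inv_mul]
  have hle : ‖dh‖ ≤ t := ht ▸ le_max_right _ _
  have hds1 : ‖ds‖ ≤ 1 := by
    rw [hnds]; exact div_le_one_of_le₀ hle (le_of_lt htpos)
  refine ⟨hds1, fun d hd => ?_⟩
  have hdh : dh = (t:ℂ) • ds := by
    rw [hds, smul_smul, mul_inv_cancel₀ htne, one_smul]
  have expand : ‖d - dh‖^2
      = ‖d - ds‖^2 + 2 * Complex.re (inner (𝕜 := ℂ) (d - ds) (ds - dh)) + ‖ds - dh‖^2 := by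
    rw [show d - dh = (d - ds) + (ds - dh) by abel]
    exact norm_add_sq (𝕜 := ℂ) _ _
  have cross : 0 ≤ Complex.re (inner (𝕜 := ℂ) (d - ds) (ds - dh)) := by
    have h2 : ds - dh = (((1 - t : ℝ)):ℂ) • ds := by
      rw [hdh]; push_cast; rw [sub_smul, one_smul]
    have h3 : (inner (𝕜 := ℂ) ds ds).re = ‖ds‖^2 := by
      simpa using inner_self_eq_norm_sq (𝕜 := ℂ) ds
    rw [h2, inner_smul_right, Complex.re_ofReal_mul, inner_sub_left,
      Complex.sub_re, h3]
    rcases eq_or_lt_of_le ht1 with h | h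
    · simp [← h]
    · have h1dh : 1 ≤ ‖dh‖ := by
        by_contra hc; push_neg at hc
        rw [ht, max_eq_left hc.le] at h; exact lt_irrefl _ h
      have hteq : t = ‖dh‖ := by rw [ht]; exact max_eq_right h1dh
      have hds_one : ‖ds‖ = 1 := by
        rw [hnds, ← hteq, div_self (ne_of_gt htpos)]
      have hip : Complex.re (inner (𝕜 := ℂ) d ds) ≤ 1 := by
        have h4 : Complex.re (inner (𝕜 := ℂ) d ds) ≤ ‖d‖ * ‖ds‖ := by
          simpa using re_inner_le_norm (𝕜 := ℂ) d ds
        calc Complex.re (inner (𝕜 := ℂ) d ds) ≤ ‖d‖ * ‖ds‖ := h4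
          _ ≤ 1 := by rw [hds_one, mul_one]; exact hd
      have : Complex.re (inner (𝕜 := ℂ) d ds) - ‖ds‖^2 ≤ 0 := by
        rw [hds_one]; nlinarith
      nlinarith
  nlinarith [expand, cross]

/-- For `min_{‖d‖₂ ≤ 1} ½‖X - d zᵀ‖_F²` with `z ≠ 0`, the unique optimal
solution is `d* = d̂ / max{1, ‖d̂‖₂}` where `d̂ = X z̄ / ‖z‖₂²`. -/
theorem rank_one_ball_constrained_ls
    (n m : ℕ) (X : Matrix (Fin n) (Fin m) ℂ) (z : Fin m → ℂ) (hz : z ≠ 0)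
    (obj : (Fin n → ℂ) → ℝ)
    (hobj : obj = fun d => (1/2) * ∑ i, ∑ j, ‖X i j - d i * z j‖^2)
    (nrm : ∀ {k : ℕ}, (Fin k → ℂ) → ℝ)
    (hnrm : ∀ (k : ℕ) (v : Fin k → ℂ), nrm v = Real.sqrt (∑ i, ‖v i‖^2))
    (dhat : Fin n → ℂ)
    (hdhat : dhat = fun i =>
      (X.mulVec (fun j => starRingEnd ℂ (z j))) i / ((∑ j, ‖z j‖^2 : ℝ) : ℂ))
    (dstar : Fin n → ℂ)
    (hdstar : dstar = fun i => dhat i / ((max 1 (nrm dhat) : ℝ) : ℂ)) :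
    nrm dstar ≤ 1 ∧ (∀ d, nrm d ≤ 1 → obj dstar ≤ obj d) ∧
    (∀ d, nrm d ≤ 1 → obj d = obj dstar → d = dstar) := by
  set Z : ℝ := ∑ j, ‖z j‖^2 with hZdef
  obtain ⟨j0, hj0⟩ := Function.ne_iff.mp hz
  have hZpos : 0 < Z := Finset.sum_pos' (fun j _ => sq_nonneg _)
    ⟨j0, Finset.mem_univ _, pow_pos (norm_pos_iff.mpr hj0) 2⟩
  have hZne : (Z:ℂ) ≠ 0 := by exact_mod_cast ne_of_gt hZpos
  have hrow : ∀ i, (∑ j, X i j * (starRingEnd ℂ) (z j)) = (Z:ℂ) * dhat i := by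
    intro i
    rw [hdhat]
    simp only [Matrix.mulVec, dotProduct]
    rw [mul_div_cancel₀ _ hZne]
  have hobj' : ∀ d, obj d
      = ((1/2) * ∑ i, ∑ j, ‖X i j‖^2) - (Z/2) * (∑ i, ‖dhat i‖^2)
        + (Z/2) * ∑ i, ‖d i - dhat i‖^2 := by
    intro d
    rw [hobj]
    simp only
    rw [Finset.sum_congr rfl fun i _ =>
      row_expand m (X i) z (d i) (dhat i) Z hZdef (hrow i)]
    rw [Finset.sum_add_distrib, Finset.sum_sub_distrib, ← Finset.mul_sum, ← Finset.mul_sum]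
    ring
  -- Euclidean space embedding
  set e : (Fin n → ℂ) → EuclideanSpace ℂ (Fin n) := ⇑(WithLp.equiv 2 (Fin n → ℂ)).symm with hedef
  have hnorm : ∀ v : Fin n → ℂ, nrm v = ‖e v‖ := by
    intro v; rw [hnrm, EuclideanSpace.norm_eq]; rfl
  have hsum_sq : ∀ v : Fin n → ℂ, ∑ i, ‖v i‖^2 = ‖e v‖^2 := by
    intro v; rw [EuclideanSpace.norm_eq, Real.sq_sqrt (by positivity)]; rfl
  have hSd : ∀ d : Fin n → ℂ, ∑ i, ‖d i - dhat i‖^2 = ‖e d - e dhat‖^2 := by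
    intro d; exact hsum_sq (fun i => d i - dhat i)
  set t : ℝ := max 1 (nrm dhat) with htdef
  have ht : t = max 1 ‖e dhat‖ := by rw [htdef, hnorm]
  have hds : e dstar = ((t:ℂ))⁻¹ • (e dhat) := by
    have h5 : dstar = fun i => (t:ℂ)⁻¹ * dhat i := by
      rw [hdstar]; funext i; rw [div_eq_inv_mul]
    rw [h5]; rfl
  obtain ⟨h1, h2⟩ := proj_ball (e dhat) t ht (e dstar) hds
  refine ⟨by rw [hnorm]; exact h1, ?_, ?_⟩
  · intro d hd
    rw [hnorm] at hd
    rw [hobj' d, hobj' dstar]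
    have hS : ∑ i, ‖dstar i - dhat i‖^2 ≤ ∑ i, ‖d i - dhat i‖^2 := by
      rw [hSd, hSd]
      nlinarith [h2 (e d) hd, sq_nonneg (‖e d - e dstar‖)]
    have := mul_le_mul_of_nonneg_left hS (le_of_lt (half_pos hZpos))
    linarith
  · intro d hd heq
    rw [hnorm] at hd
    rw [hobj' d, hobj' dstar] at heq
    have hSeq : ‖e d - e dhat‖^2 = ‖e dstar - e dhat‖^2 := by
      have h0 : Z / 2 * ∑ i, ‖d i - dhat i‖^2 = Z / 2 * ∑ i, ‖dstar i - dhat i‖^2 := by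
        linarith
      have h0' := mul_left_cancel₀ (ne_of_gt (half_pos hZpos)) h0
      rw [← hSd, ← hSd]; exact h0'
    have h6 := h2 (e d) hd
    have h7 : ‖e d - e dstar‖^2 ≤ 0 := by nlinarith [h6]
    have h8 : e d - e dstar = 0 := by
      rw [← norm_eq_zero]
      nlinarith [sq_nonneg (‖e d - e dstar‖), norm_nonneg (e d - e dstar)]
    have h9 : e d = e dstar := by rwa [sub_eq_zero] at h8
    exact (WithLp.equiv 2 (Fin n → ℂ)).symm.injective h9
end

section
/- Let f : ℝⁿ → ℝ be locally Lipschitz and directionally differentiable, and let f̂ : ℝⁿ → ℝ be continuously differentiable with f̂(s) ≥ f(s) for all s and f̂(w) = f(w) at a point w. Then ∇f̂(w) belongs to the Clarke subdifferential ∂_C f(w). -/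
open Filter Topology

/-! Along the curve `t ↦ (w - t • r, t)` the Clarke quotient of `f` is `(f w - f (w - t • r)) / t`,
which dominates the corresponding quotient of `f̂` because `f̂ ≥ f` with equality at `w`.
The latter tends to `⟪∇f̂(w), r⟫`, which therefore bounds the `limsup` from below. Local Lipschitz
continuity bounds the Clarke quotients from above, so this `limsup` in `ℝ` is not a junk value. -/

theorem le_limsup_of_tendsto_of_le_comp {α β γ : Type*} [ConditionallyCompleteLinearOrder β]
    [TopologicalSpace β] [OrderTopology β] [DenselyOrdered β] {u : α → β} {F : Filter α}
    {m : γ → α} {l : Filter γ} [l.NeBot] {g : γ → β} {a : β} (hm : Tendsto m l F)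
    (hg : Tendsto g l (𝓝 a)) (hgu : ∀ᶠ t in l, g t ≤ u (m t))
    (hu : IsBoundedUnder (· ≤ ·) F u) : a ≤ limsup u F := by
  refine le_of_forall_lt_imp_le_of_dense fun b hb ↦ ?_
  have hbu : ∀ᶠ t in l, b ≤ u (m t) :=
    ((hg.eventually (lt_mem_nhds hb)).and hgu).mono fun _ h ↦ h.1.le.trans h.2
  exact le_limsup_of_frequently_le (hm.frequently hbu.frequently) hu

theorem HasGradientAt.tendsto_slope_sub_zero_right {E : Type*} [NormedAddCommGroup E]
    [InnerProductSpace ℝ E] [CompleteSpace E] {f : E → ℝ} {f' w : E} (hf : HasGradientAt f f' w)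
    (r : E) :
    Tendsto (fun t : ℝ ↦ (f w - f (w - t • r)) / t) (𝓝[>] 0) (𝓝 (inner ℝ f' r)) := by
  have h := (hf.hasFDerivAt.hasLineDerivAt (-r)).tendsto_slope_zero_right.neg
  simp only [InnerProductSpace.toDual_apply_apply, inner_neg_right, neg_neg, smul_neg,
    ← sub_eq_add_neg, smul_eq_mul] at h
  refine h.congr fun t ↦ ?_
  rw [div_eq_inv_mul, ← mul_neg, neg_sub]

theorem LocallyLipschitz.isBoundedUnder_le_slope {E : Type*} [SeminormedAddCommGroup E]
    [NormedSpace ℝ E] {f : E → ℝ} (hf : LocallyLipschitz f) (w r : E) :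
    IsBoundedUnder (· ≤ ·) (𝓝 w ×ˢ 𝓝[>] 0) fun q : E × ℝ ↦ (f (q.1 + q.2 • r) - f q.1) / q.2 := by
  obtain ⟨K, U, hU, hK⟩ := hf w
  have hshift : Tendsto (fun q : E × ℝ ↦ q.1 + q.2 • r) (𝓝 w ×ˢ 𝓝[>] 0) (𝓝 w) := by
    have h : Tendsto (fun q : E × ℝ ↦ q.1 + q.2 • r) (𝓝 (w, 0)) (𝓝 (w + (0 : ℝ) • r)) :=
      (continuous_fst.add (continuous_snd.smul continuous_const)).tendsto _
    rw [zero_smul, add_zero, nhds_prod_eq] at h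
    exact h.mono_left (prod_mono le_rfl nhdsWithin_le_nhds)
  refine isBoundedUnder_of_eventually_le (a := K * ‖r‖) ?_
  filter_upwards [prod_mem_prod hU self_mem_nhdsWithin, hshift hU] with q ⟨hq, ht⟩ hqr
  have ht : 0 < q.2 := ht
  rw [div_le_iff₀ ht]
  calc f (q.1 + q.2 • r) - f q.1 ≤ dist (f (q.1 + q.2 • r)) (f q.1) :=
        (le_abs_self _).trans_eq (Real.dist_eq _ _).symm
    _ ≤ K * dist (q.1 + q.2 • r) q.1 := hK.dist_le_mul _ hqr _ hq
    _ = K * ‖r‖ * q.2 := by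
        rw [dist_self_add_left, norm_smul, Real.norm_of_nonneg ht.le]; ring

theorem gradient_mem_clarke_subdifferential_general
    (n : ℕ) (f fhat : EuclideanSpace ℝ (Fin n) → ℝ)
    (w : EuclideanSpace ℝ (Fin n))
    (hlip : LocallyLipschitz f)
    (hsm : ContDiff ℝ 1 fhat)
    (hmaj : ∀ s, f s ≤ fhat s) (htouch : fhat w = f w) :
    ∀ r : EuclideanSpace ℝ (Fin n),
      (inner ℝ (gradient fhat w) r : ℝ) ≤
        Filter.limsup
          (fun q : EuclideanSpace ℝ (Fin n) × ℝ => (f (q.1 + q.2 • r) - f q.1) / q.2)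
          ((nhds w) ×ˢ (nhdsWithin 0 (Set.Ioi 0))) := by
  intro r
  have hgrad : HasGradientAt fhat (gradient fhat w) w :=
    (hsm.differentiable one_ne_zero w).hasGradientAt
  have hcurve : Tendsto (fun t : ℝ ↦ (w - t • r, t)) (𝓝[>] 0) (𝓝 w ×ˢ 𝓝[>] 0) := by
    refine Tendsto.prodMk ?_ tendsto_id
    have h : Tendsto (fun t : ℝ ↦ w - t • r) (𝓝 0) (𝓝 (w - (0 : ℝ) • r)) :=
      (continuous_const.sub (continuous_id.smul continuous_const)).tendsto 0
    rw [zero_smul, sub_zero] at h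
    exact h.mono_left nhdsWithin_le_nhds
  refine le_limsup_of_tendsto_of_le_comp hcurve (hgrad.tendsto_slope_sub_zero_right r) ?_
    (hlip.isBoundedUnder_le_slope w r)
  filter_upwards [self_mem_nhdsWithin] with t (ht : 0 < t)
  rw [sub_add_cancel, htouch]
  gcongr
  exact hmaj _

/-- If `f` is locally Lipschitz and directionally differentiable, and the
`C¹` function `f̂` majorizes `f` everywhere and touches it at `w`, then
`∇f̂(w)` belongs to the Clarke subdifferential of `f` at `w`, i.e.
`⟪∇f̂(w), r⟫ ≤ f°(w; r)` for every direction `r`. -/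
theorem gradient_mem_clarke_subdifferential
    (n : ℕ) (f fhat : EuclideanSpace ℝ (Fin n) → ℝ)
    (w : EuclideanSpace ℝ (Fin n))
    (hlip : LocallyLipschitz f)
    (hdd : ∀ r : EuclideanSpace ℝ (Fin n), ∃ L : ℝ,
      Tendsto (fun t : ℝ => (f (w + t • r) - f w) / t)
        (nhdsWithin 0 (Set.Ioi 0)) (nhds L))
    (hsm : ContDiff ℝ 1 fhat)
    (hmaj : ∀ s, f s ≤ fhat s) (htouch : fhat w = f w) :
    ∀ r : EuclideanSpace ℝ (Fin n),
      (inner ℝ (gradient fhat w) r : ℝ) ≤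
        Filter.limsup
          (fun q : EuclideanSpace ℝ (Fin n) × ℝ => (f (q.1 + q.2 • r) - f q.1) / q.2)
          ((nhds w) ×ˢ (nhdsWithin 0 (Set.Ioi 0))) :=
  gradient_mem_clarke_subdifferential_general n f fhat w hlip hsm hmaj htouch
end
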